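/- arXiv:2111.12836 — 3 statements merged into one kernel-verified Lean document; each statement's English description precedes it below -/
import Mathlib

section
/- Let u : ℝ × [0,1] → ℝ be continuous with continuous partial derivative ∂_y u, suppose u(x,0) = 0 for every x ∈ ℝ, and suppose ∂_y u is square-integrable on S = ℝ × (0,1). Then u is square-integrable on S and ∫_S u(x,y)² dx dy ≤ (1/2) ∫_S (∂_y u)(x,y)² dx dy. -/
/-!
On each vertical line the fundamental theorem of calculus and Cauchy–Schwarz give
`u(x,y)² ≤ y ∫₀¹ (∂_y u)(x,t)² dt`; integrating in `y` produces the factor `∫₀¹ y dy = 1/2`.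
The resulting bound on the slice integrals of `u²` by those of `(∂_y u)²` passes to the strip by
Fubini–Tonelli, which gives the integrability of `u²` and the inequality at once.
-/

noncomputable section

open MeasureTheory Set

theorem sq_integral_le_measureReal_mul_integral_sq {α : Type*} [MeasurableSpace α]
    {μ : Measure α} [IsFiniteMeasure μ] {f : α → ℝ} (hf : Integrable f μ)
    (hf2 : Integrable (fun x => f x ^ 2) μ) :
    (∫ x, f x ∂μ) ^ 2 ≤ μ.real univ * ∫ x, f x ^ 2 ∂μ := by
  rcases eq_zero_or_neZero μ with rfl | _
  · simp
  have hm : 0 < μ.real univ := measureReal_univ_pos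
  have jensen : (⨍ x, f x ∂μ) ^ 2 ≤ ⨍ x, f x ^ 2 ∂μ :=
    (even_two.convexOn_pow (𝕜 := ℝ)).map_average_le (continuous_pow 2).continuousOn
      isClosed_univ (ae_of_all _ fun _ => mem_univ _) hf hf2
  rw [average_eq, average_eq, smul_eq_mul, smul_eq_mul] at jensen
  calc (∫ x, f x ∂μ) ^ 2 = μ.real univ ^ 2 * ((μ.real univ)⁻¹ * ∫ x, f x ∂μ) ^ 2 := by
        field_simp
    _ ≤ μ.real univ ^ 2 * ((μ.real univ)⁻¹ * ∫ x, f x ^ 2 ∂μ) := by gcongr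
    _ = μ.real univ * ∫ x, f x ^ 2 ∂μ := by field_simp

theorem sq_intervalIntegral_le_mul_intervalIntegral_sq {f : ℝ → ℝ} {a b : ℝ} (hab : a ≤ b)
    (hf : IntervalIntegrable f volume a b)
    (hf2 : IntervalIntegrable (fun t => f t ^ 2) volume a b) :
    (∫ t in a..b, f t) ^ 2 ≤ (b - a) * ∫ t in a..b, f t ^ 2 := by
  have : IsFiniteMeasure (volume.restrict (Ioc a b)) :=
    isFiniteMeasure_restrict.2 measure_Ioc_lt_top.ne
  simpa [intervalIntegral.integral_of_le hab, hab] using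
    sq_integral_le_measureReal_mul_integral_sq (μ := volume.restrict (Ioc a b))
      ((intervalIntegrable_iff_integrableOn_Ioc_of_le hab).1 hf)
      ((intervalIntegrable_iff_integrableOn_Ioc_of_le hab).1 hf2)

section DerivOnIcc

variable {f f' : ℝ → ℝ} {a b : ℝ}

theorem integral_eq_sub_of_hasDerivWithinAt_Icc
    (hf : ∀ t ∈ Icc a b, HasDerivWithinAt f (f' t) (Icc a b) t) (hf' : ContinuousOn f' (Icc a b))
    {y : ℝ} (hy : y ∈ Icc a b) : ∫ t in a..y, f' t = f y - f a := by
  have hsub : Icc a y ⊆ Icc a b := Icc_subset_Icc_right hy.2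
  refine intervalIntegral.integral_eq_sub_of_hasDerivAt_of_le hy.1
    (fun t ht => (hf t (hsub ht)).continuousWithinAt.mono hsub) (fun t ht => ?_)
    ((hf'.mono hsub).intervalIntegrable_of_Icc hy.1)
  exact (hf t (hsub (Ioo_subset_Icc_self ht))).hasDerivAt
    (Icc_mem_nhds ht.1 (ht.2.trans_le hy.2))

theorem sq_le_mul_intervalIntegral_sq_deriv
    (hf : ∀ t ∈ Icc a b, HasDerivWithinAt f (f' t) (Icc a b) t) (hf' : ContinuousOn f' (Icc a b))
    (ha : f a = 0) {y : ℝ} (hy : y ∈ Icc a b) :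
    f y ^ 2 ≤ (y - a) * ∫ t in a..b, f' t ^ 2 := by
  have hsub : Icc a y ⊆ Icc a b := Icc_subset_Icc_right hy.2
  have hsq : ContinuousOn (fun t => f' t ^ 2) (Icc a b) := hf'.pow 2
  calc f y ^ 2 = (∫ t in a..y, f' t) ^ 2 := by
        rw [integral_eq_sub_of_hasDerivWithinAt_Icc hf hf' hy, ha, sub_zero]
    _ ≤ (y - a) * ∫ t in a..y, f' t ^ 2 :=
        sq_intervalIntegral_le_mul_intervalIntegral_sq hy.1
          ((hf'.mono hsub).intervalIntegrable_of_Icc hy.1)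
          ((hsq.mono hsub).intervalIntegrable_of_Icc hy.1)
    _ ≤ (y - a) * ∫ t in a..b, f' t ^ 2 := by
        refine mul_le_mul_of_nonneg_left ?_ (sub_nonneg.2 hy.1)
        exact intervalIntegral.integral_mono_interval le_rfl hy.1 hy.2
          (ae_of_all _ fun t => sq_nonneg (f' t))
          (hsq.intervalIntegrable_of_Icc (hy.1.trans hy.2))

theorem intervalIntegral_sq_le_of_hasDerivWithinAt_Icc (hab : a ≤ b)
    (hf : ∀ t ∈ Icc a b, HasDerivWithinAt f (f' t) (Icc a b) t) (hf' : ContinuousOn f' (Icc a b))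
    (ha : f a = 0) :
    ∫ y in a..b, f y ^ 2 ≤ (b - a) ^ 2 / 2 * ∫ t in a..b, f' t ^ 2 := by
  set C := ∫ t in a..b, f' t ^ 2
  have hfc : ContinuousOn f (Icc a b) := fun t ht => (hf t ht).continuousWithinAt
  calc ∫ y in a..b, f y ^ 2 ≤ ∫ y in a..b, (y - a) * C :=
        intervalIntegral.integral_mono_on hab ((hfc.pow 2).intervalIntegrable_of_Icc hab)
          ((by fun_prop : Continuous fun y => (y - a) * C).intervalIntegrable a b)
          fun y hy => sq_le_mul_intervalIntegral_sq_deriv hf hf' ha hy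
    _ = (b - a) ^ 2 / 2 * C := by
        rw [intervalIntegral.integral_mul_const,
          intervalIntegral.integral_comp_sub_right (fun y => y), integral_id]
        ring

end DerivOnIcc

section Prod

variable {α β : Type*} [MeasurableSpace α] [MeasurableSpace β] {μ : Measure α} {ν : Measure β}
  [SFinite ν] {f g : α × β → ℝ} {c : ℝ}

theorem integrable_prod_of_ae_integral_le_mul (hf : AEStronglyMeasurable f (μ.prod ν))
    (hf0 : 0 ≤ f) (hg : Integrable g (μ.prod ν))
    (hfx : ∀ᵐ x ∂μ, Integrable (fun y => f (x, y)) ν)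
    (hle : ∀ᵐ x ∂μ, ∫ y, f (x, y) ∂ν ≤ c * ∫ y, g (x, y) ∂ν) :
    Integrable f (μ.prod ν) := by
  refine (integrable_prod_iff hf).2 ⟨hfx, ?_⟩
  refine (hg.integral_prod_left.const_mul c).norm.mono' hf.norm.integral_prod_right' ?_
  filter_upwards [hle] with x hx
  have hnorm : ∫ y, ‖f (x, y)‖ ∂ν = ∫ y, f (x, y) ∂ν :=
    integral_congr_ae (ae_of_all _ fun y => Real.norm_of_nonneg (hf0 _))
  rw [hnorm, Real.norm_of_nonneg (integral_nonneg fun y => hf0 (x, y))]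
  exact hx.trans (le_abs_self _)

theorem integral_prod_le_mul_of_ae_integral_le [SFinite μ] (hf : Integrable f (μ.prod ν))
    (hg : Integrable g (μ.prod ν))
    (hle : ∀ᵐ x ∂μ, ∫ y, f (x, y) ∂ν ≤ c * ∫ y, g (x, y) ∂ν) :
    ∫ z, f z ∂(μ.prod ν) ≤ c * ∫ z, g z ∂(μ.prod ν) := by
  rw [integral_prod f hf, integral_prod g hg, ← integral_const_mul]
  exact integral_mono_ae hf.integral_prod_left (hg.integral_prod_left.const_mul c) hle

end Prod

/-- The Poincaré inequality on the strip `S = ℝ × (0,1)` with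
constant `1/2`, for functions vanishing on the bottom boundary `y = 0`. -/
theorem poincare_strip (u uy : ℝ → ℝ → ℝ)
    (hu : ContinuousOn (fun q : ℝ × ℝ => u q.1 q.2) ((univ : Set ℝ) ×ˢ Icc (0:ℝ) 1))
    (huy : ContinuousOn (fun q : ℝ × ℝ => uy q.1 q.2) ((univ : Set ℝ) ×ˢ Icc (0:ℝ) 1))
    (hderiv : ∀ x : ℝ, ∀ y ∈ Icc (0:ℝ) 1,
      HasDerivWithinAt (u x) (uy x y) (Icc (0:ℝ) 1) y)
    (h0 : ∀ x : ℝ, u x 0 = 0)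
    (hint : IntegrableOn (fun q : ℝ × ℝ => uy q.1 q.2 ^ 2)
      ((univ : Set ℝ) ×ˢ Ioo (0:ℝ) 1)) :
    IntegrableOn (fun q : ℝ × ℝ => u q.1 q.2 ^ 2) ((univ : Set ℝ) ×ˢ Ioo (0:ℝ) 1) ∧
    (∫ q in (univ : Set ℝ) ×ˢ Ioo (0:ℝ) 1, u q.1 q.2 ^ 2) ≤
      (1/2) * ∫ q in (univ : Set ℝ) ×ˢ Ioo (0:ℝ) 1, uy q.1 q.2 ^ 2 := by
  -- `Ioc` rather than `Ioo`, so that integrals against `ν` are interval integrals over `0..1`.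
  set ν : Measure ℝ := volume.restrict (Ioc 0 1)
  have hstrip : volume.restrict ((univ : Set ℝ) ×ˢ Ioo (0:ℝ) 1) = volume.prod ν := by
    rw [Measure.volume_eq_prod, ← Measure.prod_restrict, Measure.restrict_univ,
      Measure.restrict_congr_set Ioo_ae_eq_Ioc]
  have hslice (x : ℝ) : ∫ y, u x y ^ 2 ∂ν ≤ 1 / 2 * ∫ y, uy x y ^ 2 ∂ν := by
    simpa [ν, intervalIntegral.integral_of_le zero_le_one] using
      intervalIntegral_sq_le_of_hasDerivWithinAt_Icc zero_le_one (hderiv x)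
        (huy.uncurry_left x (mem_univ x)) (h0 x)
  rw [IntegrableOn, hstrip] at hint ⊢
  have hint_u : Integrable (fun q : ℝ × ℝ => u q.1 q.2 ^ 2) (volume.prod ν) := by
    refine integrable_prod_of_ae_integral_le_mul ?_ (fun q => sq_nonneg _) hint
      (ae_of_all _ fun x => ?_) (ae_of_all _ hslice)
    · rw [← hstrip]
      exact ((hu.mono (prod_mono_right Ioo_subset_Icc_self)).pow 2).aestronglyMeasurable
        (MeasurableSet.univ.prod measurableSet_Ioo)
    · exact (((hu.uncurry_left x (mem_univ x)).pow 2).integrableOn_Icc).mono_set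
        Ioc_subset_Icc_self
  exact ⟨hint_u, integral_prod_le_mul_of_ae_integral_le hint_u hint (ae_of_all _ hslice)⟩

end
end

section
/- Let g : ℝ × [0,1] → ℝ be continuous with continuous partial derivative ∂_y g, and suppose g and ∂_y g are square-integrable on S = ℝ × (0,1). Assume that for every x ∈ ℝ there exists y₀ = y₀(x) ∈ [0,1] with g(x, y₀) = 0 (this holds in particular if g(x,0) = 0 for all x, or if ∫₀¹ g(x,y) dy = 0 for all x). Then ∫_ℝ ( sup_{y ∈ [0,1]} |g(x,y)| )² dx ≤ 2 ‖g‖_{L²(S)} ‖∂_y g‖_{L²(S)}. -/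
/-!
On each vertical fiber, with `y₀` a zero and `y₁` a maximum point of `|g x ·|`, the fundamental
theorem of calculus gives `g(x,y₁)² = ∫_{y₀}^{y₁} 2 g ∂_y g ≤ 2 ‖g(x,·)‖₂ ‖∂_y g(x,·)‖₂` by
Cauchy–Schwarz in `y`. Integrating in `x` and applying Cauchy–Schwarz once more, now to
`x ↦ ‖g(x,·)‖₂` and `x ↦ ‖∂_y g(x,·)‖₂`, turns the right-hand side into
`2 ‖g‖_{L²(S)} ‖∂_y g‖_{L²(S)}` by Fubini.
-/

open MeasureTheory Set

section CauchySchwarz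

variable {α : Type*} [MeasurableSpace α] {μ : Measure α}

lemma integral_mul_le_sqrt_mul_sqrt {f h : α → ℝ} (hf0 : 0 ≤ᵐ[μ] f) (hh0 : 0 ≤ᵐ[μ] h)
    (hf : MemLp f 2 μ) (hh : MemLp h 2 μ) :
    ∫ a, f a * h a ∂μ ≤ √(∫ a, f a ^ 2 ∂μ) * √(∫ a, h a ^ 2 ∂μ) := by
  have two : ENNReal.ofReal 2 = 2 := by norm_num
  have := integral_mul_le_Lp_mul_Lq_of_nonneg .two_two hf0 hh0 (two ▸ hf) (two ▸ hh)
  simpa only [Real.rpow_two, ← Real.sqrt_eq_rpow] using this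

lemma integral_sqrt_mul_sqrt_le {F G : α → ℝ} (hF0 : 0 ≤ F) (hG0 : 0 ≤ G)
    (hF : Integrable F μ) (hG : Integrable G μ) :
    ∫ a, √(F a) * √(G a) ∂μ ≤ √(∫ a, F a ∂μ) * √(∫ a, G a ∂μ) := by
  have memLp_sqrt : ∀ {H : α → ℝ}, 0 ≤ H → Integrable H μ → MemLp (fun a => √(H a)) 2 μ :=
    fun hH0 hH => (memLp_two_iff_integrable_sq
      (Real.continuous_sqrt.comp_aestronglyMeasurable hH.aestronglyMeasurable)).2 <|
      hH.congr (.of_forall fun a => (Real.sq_sqrt (hH0 a)).symm)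
  have := integral_mul_le_sqrt_mul_sqrt (.of_forall fun a => Real.sqrt_nonneg (F a))
    (.of_forall fun a => Real.sqrt_nonneg (G a)) (memLp_sqrt hF0 hF) (memLp_sqrt hG0 hG)
  simpa only [Real.sq_sqrt (hF0 _), Real.sq_sqrt (hG0 _)] using this

lemma integrable_sqrt_mul_sqrt {F G : α → ℝ} (hF0 : 0 ≤ F) (hG0 : 0 ≤ G)
    (hF : Integrable F μ) (hG : Integrable G μ) :
    Integrable (fun a => √(F a) * √(G a)) μ := by
  have sqrt_meas : ∀ {H : α → ℝ}, Integrable H μ → AEStronglyMeasurable (fun a => √(H a)) μ :=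
    fun hH => Real.continuous_sqrt.comp_aestronglyMeasurable hH.aestronglyMeasurable
  refine ((hF.add hG).div_const 2).mono' ((sqrt_meas hF).mul (sqrt_meas hG))
    (.of_forall fun a => ?_)
  rw [Real.norm_eq_abs, abs_of_nonneg (by positivity), Pi.add_apply]
  nlinarith [sq_nonneg (√(F a) - √(G a)), Real.sq_sqrt (hF0 a), Real.sq_sqrt (hG0 a)]

lemma integral_le_two_mul_sqrt_mul_sqrt {S F G : α → ℝ} (hS0 : 0 ≤ S)
    (hSFG : ∀ a, S a ≤ 2 * √(F a) * √(G a)) (hF0 : 0 ≤ F) (hG0 : 0 ≤ G)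
    (hF : Integrable F μ) (hG : Integrable G μ) :
    ∫ a, S a ∂μ ≤ 2 * √(∫ a, F a ∂μ) * √(∫ a, G a ∂μ) :=
  calc ∫ a, S a ∂μ ≤ ∫ a, 2 * (√(F a) * √(G a)) ∂μ :=
        integral_mono_of_nonneg (.of_forall hS0)
          ((integrable_sqrt_mul_sqrt hF0 hG0 hF hG).const_mul 2)
          (.of_forall fun a => (hSFG a).trans_eq (mul_assoc _ _ _))
    _ ≤ 2 * √(∫ a, F a ∂μ) * √(∫ a, G a ∂μ) := by
        rw [integral_const_mul, mul_assoc]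
        gcongr
        exact integral_sqrt_mul_sqrt_le hF0 hG0 hF hG

end CauchySchwarz

section Fiber

variable {f f' : ℝ → ℝ} {a b : ℝ}

lemma sq_le_two_mul_integral_abs_mul_abs_deriv (hf' : ContinuousOn f' (Icc a b))
    (hd : ∀ y ∈ Icc a b, HasDerivWithinAt f (f' y) (Icc a b) y)
    {y₀ y₁ : ℝ} (hy₀ : y₀ ∈ Icc a b) (hy₁ : y₁ ∈ Icc a b) (hfy₀ : f y₀ = 0) :
    f y₁ ^ 2 ≤ 2 * ∫ y in Icc a b, |f y| * |f' y| := by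
  have hf : ContinuousOn f (Icc a b) := fun y hy => (hd y hy).continuousWithinAt
  have hsub : uIcc y₀ y₁ ⊆ Icc a b := uIcc_subset_Icc hy₀ hy₁
  have hint : IntegrableOn (fun y => 2 * f y * f' y) (Icc a b) :=
    ((continuousOn_const.mul hf).mul hf').integrableOn_Icc
  have ftc : ∫ y in y₀..y₁, 2 * f y * f' y = f y₁ ^ 2 - f y₀ ^ 2 := by
    refine intervalIntegral.integral_eq_sub_of_hasDeriv_right ((hf.pow 2).mono hsub)
      (fun y hy => ?_) (hint.mono_set hsub).intervalIntegrable
    have hy : y ∈ Ioo a b := Ioo_subset_Ioo (le_min hy₀.1 hy₁.1) (max_le hy₀.2 hy₁.2) hy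
    have := ((hd y (Ioo_subset_Icc_self hy)).hasDerivAt (Icc_mem_nhds hy.1 hy.2)).pow 2
    convert this.hasDerivWithinAt using 1
    ring
  calc f y₁ ^ 2 = ∫ y in y₀..y₁, 2 * f y * f' y := by rw [ftc, hfy₀]; ring
    _ ≤ ∫ y in uIoc y₀ y₁, ‖2 * f y * f' y‖ :=
        (Real.le_norm_self _).trans intervalIntegral.norm_integral_le_integral_norm_uIoc
    _ ≤ ∫ y in Icc a b, ‖2 * f y * f' y‖ :=
        setIntegral_mono_set hint.norm (.of_forall fun _ => norm_nonneg _)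
          (uIoc_subset_uIcc.trans hsub).eventuallyLE
    _ = 2 * ∫ y in Icc a b, |f y| * |f' y| := by
        simp only [Real.norm_eq_abs, abs_mul, abs_two, mul_assoc, integral_const_mul]

lemma sSup_abs_sq_le_two_mul_sqrt_mul_sqrt (hab : a ≤ b) (hf' : ContinuousOn f' (Icc a b))
    (hd : ∀ y ∈ Icc a b, HasDerivWithinAt f (f' y) (Icc a b) y)
    (hzero : ∃ y₀ ∈ Icc a b, f y₀ = 0) :
    sSup ((fun y => |f y|) '' Icc a b) ^ 2 ≤
      2 * √(∫ y in Ioo a b, f y ^ 2) * √(∫ y in Ioo a b, f' y ^ 2) := by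
  have hf : ContinuousOn f (Icc a b) := fun y hy => (hd y hy).continuousWithinAt
  obtain ⟨y₀, hy₀, hfy₀⟩ := hzero
  obtain ⟨y₁, hy₁, hmax⟩ : sSup ((fun y => |f y|) '' Icc a b) ∈ (fun y => |f y|) '' Icc a b :=
    (isCompact_Icc.image_of_continuousOn hf.abs).sSup_mem ((nonempty_Icc.2 hab).image _)
  have memLp_abs : ∀ {h : ℝ → ℝ}, ContinuousOn h (Icc a b) →
      MemLp (fun y => |h y|) 2 (volume.restrict (Icc a b)) := fun hh =>
    (memLp_two_iff_integrable_sq (hh.abs.aestronglyMeasurable measurableSet_Icc)).2 <| by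
      simp only [sq_abs]
      exact (hh.fun_pow 2).integrableOn_Icc
  rw [← hmax, sq_abs, ← integral_Icc_eq_integral_Ioo, ← integral_Icc_eq_integral_Ioo]
  calc f y₁ ^ 2 ≤ 2 * ∫ y in Icc a b, |f y| * |f' y| :=
        sq_le_two_mul_integral_abs_mul_abs_deriv hf' hd hy₀ hy₁ hfy₀
    _ ≤ 2 * (√(∫ y in Icc a b, |f y| ^ 2) * √(∫ y in Icc a b, |f' y| ^ 2)) := by
        gcongr
        exact integral_mul_le_sqrt_mul_sqrt (.of_forall fun _ => abs_nonneg _)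
          (.of_forall fun _ => abs_nonneg _) (memLp_abs hf) (memLp_abs hf')
    _ = 2 * √(∫ y in Icc a b, f y ^ 2) * √(∫ y in Icc a b, f' y ^ 2) := by
        simp only [sq_abs, mul_assoc]

end Fiber

section Fubini

variable {α β : Type*} [MeasurableSpace α] [MeasurableSpace β] {μ : Measure α} {ν : Measure β}
  [SFinite μ] [SFinite ν] {f : α × β → ℝ} {t : Set β}

lemma integrable_setIntegral_of_integrableOn_univ_prod
    (hf : IntegrableOn f (univ ×ˢ t) (μ.prod ν)) :
    Integrable (fun x => ∫ y in t, f (x, y) ∂ν) μ := by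
  rw [IntegrableOn, ← Measure.prod_restrict, Measure.restrict_univ] at hf
  exact hf.integral_prod_left

lemma setIntegral_univ_prod (hf : IntegrableOn f (univ ×ˢ t) (μ.prod ν)) :
    ∫ z in univ ×ˢ t, f z ∂μ.prod ν = ∫ x, ∫ y in t, f (x, y) ∂ν ∂μ := by
  rw [setIntegral_prod f hf, Measure.restrict_univ]

end Fubini

theorem agmon_vertical_general (g gy : ℝ → ℝ → ℝ)
    (hgy : ContinuousOn (fun q : ℝ × ℝ => gy q.1 q.2) ((univ : Set ℝ) ×ˢ Icc (0:ℝ) 1))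
    (hderiv : ∀ x : ℝ, ∀ y ∈ Icc (0:ℝ) 1,
      HasDerivWithinAt (g x) (gy x y) (Icc (0:ℝ) 1) y)
    (hintg : IntegrableOn (fun q : ℝ × ℝ => g q.1 q.2 ^ 2)
      ((univ : Set ℝ) ×ˢ Ioo (0:ℝ) 1))
    (hintgy : IntegrableOn (fun q : ℝ × ℝ => gy q.1 q.2 ^ 2)
      ((univ : Set ℝ) ×ˢ Ioo (0:ℝ) 1))
    (hzero : ∀ x : ℝ, ∃ y₀ ∈ Icc (0:ℝ) 1, g x y₀ = 0) :
    (∫ x : ℝ, (sSup ((fun y => |g x y|) '' Icc (0:ℝ) 1)) ^ 2) ≤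
      2 * Real.sqrt (∫ q in (univ : Set ℝ) ×ˢ Ioo (0:ℝ) 1, g q.1 q.2 ^ 2) *
        Real.sqrt (∫ q in (univ : Set ℝ) ×ˢ Ioo (0:ℝ) 1, gy q.1 q.2 ^ 2) := by
  rw [Measure.volume_eq_prod] at hintg hintgy ⊢
  rw [setIntegral_univ_prod hintg, setIntegral_univ_prod hintgy]
  refine integral_le_two_mul_sqrt_mul_sqrt (fun x => sq_nonneg _) (fun x => ?_)
    (fun x => integral_nonneg fun y => sq_nonneg _) (fun x => integral_nonneg fun y => sq_nonneg _)
    (integrable_setIntegral_of_integrableOn_univ_prod hintg)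
    (integrable_setIntegral_of_integrableOn_univ_prod hintgy)
  have hgy_x : ContinuousOn (gy x) (Icc 0 1) :=
    hgy.comp (Continuous.prodMk_right x).continuousOn fun y hy => ⟨mem_univ x, hy⟩
  exact sSup_abs_sq_le_two_mul_sqrt_mul_sqrt zero_le_one hgy_x (hderiv x) (hzero x)

/-- The Agmon-type interpolation inequality on the strip:
`∫_ℝ (sup_{y∈[0,1]} |g(x,y)|)² dx ≤ 2 ‖g‖_{L²(S)} ‖∂_y g‖_{L²(S)}`, valid for `g`
vanishing at some point of each vertical fiber. -/
theorem agmon_vertical (g gy : ℝ → ℝ → ℝ)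
    (hg : ContinuousOn (fun q : ℝ × ℝ => g q.1 q.2) ((univ : Set ℝ) ×ˢ Icc (0:ℝ) 1))
    (hgy : ContinuousOn (fun q : ℝ × ℝ => gy q.1 q.2) ((univ : Set ℝ) ×ˢ Icc (0:ℝ) 1))
    (hderiv : ∀ x : ℝ, ∀ y ∈ Icc (0:ℝ) 1,
      HasDerivWithinAt (g x) (gy x y) (Icc (0:ℝ) 1) y)
    (hintg : IntegrableOn (fun q : ℝ × ℝ => g q.1 q.2 ^ 2)
      ((univ : Set ℝ) ×ˢ Ioo (0:ℝ) 1))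
    (hintgy : IntegrableOn (fun q : ℝ × ℝ => gy q.1 q.2 ^ 2)
      ((univ : Set ℝ) ×ˢ Ioo (0:ℝ) 1))
    (hzero : ∀ x : ℝ, ∃ y₀ ∈ Icc (0:ℝ) 1, g x y₀ = 0) :
    (∫ x : ℝ, (sSup ((fun y => |g x y|) '' Icc (0:ℝ) 1)) ^ 2) ≤
      2 * Real.sqrt (∫ q in (univ : Set ℝ) ×ˢ Ioo (0:ℝ) 1, g q.1 q.2 ^ 2) *
        Real.sqrt (∫ q in (univ : Set ℝ) ×ˢ Ioo (0:ℝ) 1, gy q.1 q.2 ^ 2) :=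
  agmon_vertical_general g gy hgy hderiv hintg hintgy hzero
end

section
/- There is a universal constant C > 0 (depending only on the annulus {3/4 ≤ |τ| ≤ 8/3}) such that the following holds. Let k ∈ ℤ and let u : ℝ × [0,1] → ℝ be continuous with continuous partial derivative ∂_x u, with u(·,y) integrable and square-integrable for each y, u square-integrable on S = ℝ × (0,1), and suppose that for each y ∈ [0,1] the partial Fourier transform û(ξ,y) in x vanishes for all ξ with |ξ| outside [ (3/4)·2^k, (8/3)·2^k ]. Define v(x,y) = −∫₀^y ∂_x u(x,y') dy'. Then sup_{(x,y) ∈ ℝ×[0,1]} |v(x,y)| ≤ C 2^{3k/2} ‖u‖_{L²(S)}. -/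
open MeasureTheory Set intervalIntegral
open Real Complex FourierTransform

/-!
For each height `y`, the slice `u(·, y)` has Fourier transform supported in `|ξ| ≤ R = (8/3) 2^k`.
By Fourier inversion `∂ₓu(x, y) = ∫_{-R}^{R} 2πiξ û(ξ, y) e^{2πixξ} dξ`, so Cauchy–Schwarz on
`[-R, R]` and Plancherel give `|∂ₓu(x, y)| ≤ 2πR √(2R) ‖u(·, y)‖_{L²(ℝ)}`, where `R √R ∼ 2^{3k/2}`.
Integrating over `y ∈ [0, 1]` and applying Cauchy–Schwarz once more bounds
`∫₀¹ ‖u(·, y)‖_{L²(ℝ)} dy` by `‖u‖_{L²(S)}`.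
-/

theorem integral_le_sqrt_measureReal_mul_sqrt_integral_sq {α : Type*} [MeasurableSpace α]
    {μ : Measure α} [IsFiniteMeasure μ] {φ : α → ℝ} (hφ_nonneg : 0 ≤ᵐ[μ] φ) (hφ : MemLp φ 2 μ) :
    ∫ a, φ a ∂μ ≤ √(μ.real univ) * √(∫ a, φ a ^ 2 ∂μ) := by
  have h := integral_mul_le_Lp_mul_Lq_of_nonneg (p := 2) (q := 2) Real.HolderConjugate.two_two
    (Filter.Eventually.of_forall fun _ ↦ zero_le_one) hφ_nonneg
    (by simpa using memLp_const (1 : ℝ)) (by simpa using hφ)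
  simpa [sqrt_eq_rpow] using h

theorem Real.hasDerivAt_fourierInv {E : Type*} [NormedAddCommGroup E] [NormedSpace ℂ E]
    {g : ℝ → E} (hg : Integrable g) (hg' : Integrable (fun ξ : ℝ ↦ ξ • g ξ)) (x : ℝ) :
    HasDerivAt (𝓕⁻ g) (𝓕⁻ (fun ξ : ℝ ↦ (2 * π * I * ξ) • g ξ) x) x := by
  have h := (hasDerivAt_fourier hg hg' (-x)).scomp x (hasDerivAt_neg x)
  have hfun : 𝓕 g ∘ Neg.neg = 𝓕⁻ g := funext fun t ↦ (fourierInv_eq_fourier_neg g t).symm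
  rw [hfun] at h
  convert h using 1
  simp only [fourierInv_eq_fourier_neg, fourier_eq, neg_smul, one_smul,
    ← MeasureTheory.integral_neg]
  congr 1 with ξ
  simp

theorem Continuous.integral_norm_sq_fourier {V H : Type*} [NormedAddCommGroup V]
    [InnerProductSpace ℝ V] [FiniteDimensional ℝ V] [MeasurableSpace V] [BorelSpace V]
    [NormedAddCommGroup H] [InnerProductSpace ℂ H] [CompleteSpace H]
    {f : V → H} (hc : Continuous f) (hf : Integrable f)
    (hF : Integrable (𝓕 f)) : ∫ ξ, ‖𝓕 f ξ‖ ^ 2 = ∫ x, ‖f x‖ ^ 2 := by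
  have h := VectorFourier.integral_sesq_fourierIntegral_eq_neg_flip (innerSL ℂ) (L := innerₗ V)
    continuous_fourierChar continuous_inner hf hF
  have hflip : (innerₗ V).flip = innerₗ V := by ext; simp
  rw [hflip] at h
  change ∫ ξ, Inner.inner ℂ (𝓕 f ξ) (𝓕 f ξ) = ∫ x, Inner.inner ℂ (f x) (𝓕⁻ (𝓕 f) x) at h
  rw [hc.fourierInv_fourier_eq hf hF] at h
  apply Complex.ofRealLI.injective
  simpa [← LinearIsometry.integral_comp_comm, inner_self_eq_norm_sq_to_K] using h

theorem HasDerivAt.norm_le_of_support_fourier_subset {H : Type*} [NormedAddCommGroup H]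
    [InnerProductSpace ℂ H] [CompleteSpace H] {f : ℝ → H} {f' : H} {R x : ℝ} (hR : 0 ≤ R)
    (hc : Continuous f) (hf : Integrable f) (hsupp : Function.support (𝓕 f) ⊆ Icc (-R) R)
    (hderiv : HasDerivAt f f' x) :
    ‖f'‖ ≤ 2 * π * R * √(2 * R) * √(∫ t, ‖f t‖ ^ 2) := by
  set g := 𝓕 f
  have hg_cont : Continuous g :=
    VectorFourier.fourierIntegral_continuous continuous_fourierChar continuous_inner hf
  have hg_zero : ∀ ξ ∉ Icc (-R) R, g ξ = 0 := fun ξ hξ ↦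
    Function.notMem_support.1 fun h ↦ hξ (hsupp h)
  have hg_supp : HasCompactSupport g := HasCompactSupport.intro isCompact_Icc hg_zero
  have hg_int : Integrable g := hg_cont.integrable_of_hasCompactSupport hg_supp
  have hf' : f' = 𝓕⁻ (fun ξ : ℝ ↦ (2 * π * I * ξ) • g ξ) x := by
    refine hderiv.unique ?_
    rw [← hc.fourierInv_fourier_eq hf hg_int]
    exact hasDerivAt_fourierInv hg_int
      ((continuous_id.smul hg_cont).integrable_of_hasCompactSupport hg_supp.smul_left) x
  have hbound : ∀ ξ ∈ Icc (-R) R, ‖(2 * π * I * ξ) • g ξ‖ ≤ 2 * π * R * ‖g ξ‖ := by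
    intro ξ hξ
    have hnorm : ‖(2 * π * I * ξ : ℂ)‖ = 2 * π * |ξ| := by simp [abs_of_pos pi_pos]
    rw [norm_smul, hnorm]
    gcongr
    exact abs_le.2 hξ
  have hcs : ∫ ξ in Icc (-R) R, ‖g ξ‖ ≤ √(2 * R) * √(∫ ξ in Icc (-R) R, ‖g ξ‖ ^ 2) := by
    have := integral_le_sqrt_measureReal_mul_sqrt_integral_sq
      (Filter.Eventually.of_forall fun ξ ↦ norm_nonneg (g ξ))
      (hg_cont.norm.memLp_of_hasCompactSupport hg_supp.norm (μ := volume.restrict (Icc (-R) R)))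
    rwa [measureReal_restrict_apply_univ, Real.volume_real_Icc, max_eq_left (by linarith),
      sub_neg_eq_add, ← two_mul] at this
  calc ‖f'‖ ≤ ∫ ξ : ℝ, ‖(2 * π * I * ξ) • g ξ‖ :=
        hf' ▸ VectorFourier.norm_fourierIntegral_le_integral_norm 𝐞 volume (-innerₗ ℝ) _ x
    _ = ∫ ξ in Icc (-R) R, ‖(2 * π * I * ξ) • g ξ‖ :=
        (setIntegral_eq_integral_of_forall_compl_eq_zero fun ξ hξ ↦ by simp [hg_zero ξ hξ]).symm
    _ ≤ ∫ ξ in Icc (-R) R, 2 * π * R * ‖g ξ‖ :=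
        setIntegral_mono_on (by fun_prop : Continuous _).integrableOn_Icc
          (by fun_prop : Continuous _).integrableOn_Icc measurableSet_Icc hbound
    _ = 2 * π * R * ∫ ξ in Icc (-R) R, ‖g ξ‖ := integral_const_mul _ _
    _ ≤ 2 * π * R * (√(2 * R) * √(∫ ξ in Icc (-R) R, ‖g ξ‖ ^ 2)) := by gcongr
    _ = 2 * π * R * √(2 * R) * √(∫ t, ‖f t‖ ^ 2) := by
        rw [setIntegral_eq_integral_of_forall_compl_eq_zero fun ξ hξ ↦ by simp [hg_zero ξ hξ],
          hc.integral_norm_sq_fourier hf hg_int]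
        ring

theorem HasDerivAt.abs_le_of_support_fourier_ofReal_subset {f : ℝ → ℝ} {f' R x : ℝ} (hR : 0 ≤ R)
    (hc : Continuous f) (hf : Integrable f)
    (hsupp : Function.support (𝓕 fun t ↦ (f t : ℂ)) ⊆ Icc (-R) R) (hderiv : HasDerivAt f f' x) :
    |f'| ≤ 2 * π * R * √(2 * R) * √(∫ t, f t ^ 2) := by
  simpa using hderiv.ofReal_comp.norm_le_of_support_fourier_subset hR
    (continuous_ofReal.comp hc) hf.ofReal hsupp

theorem integral_univ_prod_eq_integral_integral {α β E : Type*} [MeasurableSpace α]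
    [MeasurableSpace β] [NormedAddCommGroup E] [NormedSpace ℝ E] {μ : Measure α} {ν : Measure β}
    [SFinite μ] [SFinite ν] {F : α → β → E} {s : Set β}
    (hF : IntegrableOn (fun q : α × β ↦ F q.1 q.2) (univ ×ˢ s) (μ.prod ν)) :
    IntegrableOn (fun y ↦ ∫ x, F x y ∂μ) s ν ∧
      ∫ q in univ ×ˢ s, F q.1 q.2 ∂(μ.prod ν) = ∫ y in s, ∫ x, F x y ∂μ ∂ν := by
  rw [IntegrableOn, ← Measure.prod_restrict, Measure.restrict_univ] at hF
  rw [← Measure.prod_restrict, Measure.restrict_univ]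
  exact ⟨hF.integral_prod_right, integral_prod_symm _ hF⟩

theorem abs_intervalIntegral_le_mul_sqrt_integral {F h : ℝ → ℝ} {c y : ℝ} (hc : 0 ≤ c)
    (hy : y ∈ Icc (0 : ℝ) 1) (hF : IntegrableOn F (Ioc 0 1)) (hh : IntegrableOn h (Ioc 0 1))
    (hh_nonneg : ∀ t, 0 ≤ h t) (hFh : ∀ t ∈ Ioc (0 : ℝ) 1, |F t| ≤ c * √(h t)) :
    |∫ t in 0..y, F t| ≤ c * √(∫ t in Ioc 0 1, h t) := by
  have hsq : ∀ t, √(h t) ^ 2 = h t := fun t ↦ sq_sqrt (hh_nonneg t)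
  have hsqrt : MemLp (fun t ↦ √(h t)) 2 (volume.restrict (Ioc 0 1)) :=
    (memLp_two_iff_integrable_sq (continuous_sqrt.comp_aestronglyMeasurable
      hh.aestronglyMeasurable)).2 (by simp only [hsq]; exact hh)
  have hcs : ∫ t in Ioc 0 1, √(h t) ≤ √(∫ t in Ioc 0 1, h t) := by
    simpa [hsq] using integral_le_sqrt_measureReal_mul_sqrt_integral_sq
      (Filter.Eventually.of_forall fun t ↦ sqrt_nonneg (h t)) hsqrt
  calc |∫ t in 0..y, F t| ≤ ∫ t in Ioc 0 y, |F t| := by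
        rw [integral_of_le hy.1]
        exact abs_integral_le_integral_abs
    _ ≤ ∫ t in Ioc 0 1, |F t| :=
        setIntegral_mono_set hF.abs (Filter.Eventually.of_forall fun t ↦ abs_nonneg (F t))
          (Ioc_subset_Ioc_right hy.2).eventuallyLE
    _ ≤ ∫ t in Ioc 0 1, c * √(h t) :=
        setIntegral_mono_on hF.abs ((hsqrt.integrable one_le_two).const_mul c)
          measurableSet_Ioc hFh
    _ = c * ∫ t in Ioc 0 1, √(h t) := integral_const_mul c _
    _ ≤ c * √(∫ t in Ioc 0 1, h t) := by gcongr

theorem zpow_mul_sqrt_zpow {a : ℝ} (ha : 0 < a) (k : ℤ) :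
    a ^ k * √(a ^ k) = a ^ (3 * (k : ℝ) / 2) := by
  rw [← rpow_intCast, sqrt_eq_rpow, ← rpow_mul ha.le, ← rpow_add ha]
  ring_nf

/-- Bound on the vertical velocity reconstructed from a
horizontally spectrally localized horizontal velocity via the divergence-free
condition: `sup |v| ≤ C 2^{3k/2} ‖u‖_{L²(S)}` where `v(x,y) = -∫₀^y ∂_x u(x,y') dy'`. -/
theorem bernstein_vertical_velocity :
    ∃ C : ℝ, 0 < C ∧
      ∀ (k : ℤ) (u ux : ℝ → ℝ → ℝ),
        ContinuousOn (fun q : ℝ × ℝ => u q.1 q.2) ((univ : Set ℝ) ×ˢ Icc (0:ℝ) 1) →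
        ContinuousOn (fun q : ℝ × ℝ => ux q.1 q.2) ((univ : Set ℝ) ×ˢ Icc (0:ℝ) 1) →
        (∀ x : ℝ, ∀ y ∈ Icc (0:ℝ) 1, HasDerivAt (fun x' => u x' y) (ux x y) x) →
        (∀ y ∈ Icc (0:ℝ) 1, Integrable (fun x => u x y)) →
        (∀ y ∈ Icc (0:ℝ) 1, Integrable (fun x => u x y ^ 2)) →
        IntegrableOn (fun q : ℝ × ℝ => u q.1 q.2 ^ 2) ((univ : Set ℝ) ×ˢ Ioo (0:ℝ) 1) →
        (∀ y ∈ Icc (0:ℝ) 1, ∀ ξ : ℝ,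
          ¬ (3/4 * (2:ℝ) ^ k ≤ |ξ| ∧ |ξ| ≤ 8/3 * (2:ℝ) ^ k) →
          (∫ x : ℝ, Complex.exp ((((-2) * Real.pi * x * ξ : ℝ) : ℂ) * Complex.I) *
            (u x y : ℂ)) = 0) →
        ∀ x : ℝ, ∀ y ∈ Icc (0:ℝ) 1,
          |(-(∫ y' in (0:ℝ)..y, ux x y'))| ≤
            C * (2:ℝ) ^ (3 * (k : ℝ) / 2) *
              Real.sqrt (∫ q in (univ : Set ℝ) ×ˢ Ioo (0:ℝ) 1, u q.1 q.2 ^ 2) := by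
  refine ⟨2 * π * (8 / 3) * √(16 / 3), by positivity, ?_⟩
  intro k u ux hu hux hderiv hint _ hint_strip hspec x y hy
  set R : ℝ := 8 / 3 * 2 ^ k
  have hR : 0 ≤ R := by positivity
  have hconst : 2 * π * R * √(2 * R) = 2 * π * (8 / 3) * √(16 / 3) * 2 ^ (3 * (k : ℝ) / 2) := by
    rw [← zpow_mul_sqrt_zpow two_pos, show 2 * R = 16 / 3 * 2 ^ k by ring,
      sqrt_mul (by norm_num)]
    ring
  have hslice : ∀ t ∈ Icc (0 : ℝ) 1, |ux x t| ≤ 2 * π * R * √(2 * R) * √(∫ s, u s t ^ 2) := by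
    intro t ht
    refine (hderiv x t ht).abs_le_of_support_fourier_ofReal_subset hR ?_ (hint t ht) ?_
    · exact continuousOn_univ.1 <|
        hu.comp (f := fun s ↦ (s, t)) (by fun_prop) fun s _ ↦ ⟨mem_univ s, ht⟩
    · intro ξ hξ
      by_contra hout
      refine hξ ?_
      rw [fourier_real_eq_integral_exp_smul]
      exact hspec t ht ξ fun hband ↦ hout (abs_le.1 hband.2)
  obtain ⟨hslices_int, hfubini⟩ :=
    integral_univ_prod_eq_integral_integral (F := fun s t ↦ u s t ^ 2) (μ := volume) (ν := volume)
      (by rwa [← Measure.volume_eq_prod])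
  rw [abs_neg, ← hconst, Measure.volume_eq_prod, hfubini, ← integral_Ioc_eq_integral_Ioo]
  refine abs_intervalIntegral_le_mul_sqrt_integral (by positivity) hy ?_
    (hslices_int.congr_set_ae Ioo_ae_eq_Ioc.symm) (fun t ↦ integral_nonneg fun s ↦ sq_nonneg _)
    fun t ht ↦ hslice t (Ioc_subset_Icc_self ht)
  exact (hux.comp (f := fun t ↦ (x, t)) (by fun_prop) fun t ht ↦ ⟨mem_univ x, ht⟩)
    |>.integrableOn_Icc.mono_set Ioc_subset_Icc_self
end
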